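/- (Rank envelope test, acceptance case.) The observed curve lies strictly inside the global rank envelope, i.e., T_low^(k_α)(r) < T_1(r) < T_upp^(k_α)(r) for all r ∈ I, if and only if p_- > α. -/

import Mathlib

open Finset

/-- The upward pointwise rank `R_i^↑(r) = #{j : T_j(r) ≤ T_i(r)}`. -/
noncomputable def upRank {s : ℕ} {ι : Type*} (T : Fin (s + 1) → ι → ℝ) (i : Fin (s + 1)) (r : ι) : ℕ :=
  {j : Fin (s + 1) | T j r ≤ T i r}.ncard

/-- The downward pointwise rank `R_i^↓(r) = #{j : T_j(r) ≥ T_i(r)}`. -/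
noncomputable def downRank {s : ℕ} {ι : Type*} (T : Fin (s + 1) → ι → ℝ) (i : Fin (s + 1)) (r : ι) : ℕ :=
  {j : Fin (s + 1) | T i r ≤ T j r}.ncard

/-- The two-sided pointwise rank `R_i^*(r) = min(R_i^↑(r), R_i^↓(r))`. -/
noncomputable def twoSidedRank {s : ℕ} {ι : Type*} (T : Fin (s + 1) → ι → ℝ) (i : Fin (s + 1)) (r : ι) : ℕ :=
  min (upRank T i r) (downRank T i r)

/-- The extreme rank `R_i = min_{r ∈ I} R_i^*(r)`. -/
noncomputable def extremeRank {s : ℕ} {ι : Type*} [Fintype ι] [Nonempty ι]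
    (T : Fin (s + 1) → ι → ℝ) (i : Fin (s + 1)) : ℕ :=
  univ.inf' univ_nonempty (fun r => twoSidedRank T i r)

/-- The lower bound of the `k`-th envelope: the `k`-th smallest of `T_1(r), …, T_{s+1}(r)`. -/
noncomputable def envLow {s : ℕ} {ι : Type*} (T : Fin (s + 1) → ι → ℝ) (k : ℕ) (r : ι) : ℝ :=
  ((univ.image (fun i => T i r)).sort (· ≤ ·)).getD (k - 1) 0

/-- The upper bound of the `k`-th envelope: the `k`-th largest of `T_1(r), …, T_{s+1}(r)`. -/
noncomputable def envUpp {s : ℕ} {ι : Type*} (T : Fin (s + 1) → ι → ℝ) (k : ℕ) (r : ι) : ℝ :=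
  ((univ.image (fun i => T i r)).sort (· ≤ ·)).getD (s + 1 - k) 0

/-!
Without ties, the value `T i r` sits at some position `q` (counting from `0`) of the sorted sample
at `r`, so its upward rank is `q + 1` and its downward rank is `s + 1 - q`, while the `k`-th
envelope bounds are the sorted values at positions `k - 1` and `s + 1 - k`. Hence `T i r` lies
strictly inside the `k`-th envelope iff `k < R_i^*(r)`, and it does so for every `r` iff
`k < R_i`. As `k ↦ #{i : R_i < k}` is monotone, the maximality of `k_α` turns `k_α < R_1` into
`α (s + 1) < #{i : R_i < R_1}`.
-/

namespace Finset

variable {α : Type*} [LinearOrder α] (F : Finset α) {n : ℕ} (h : #F = n)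

theorem card_filter_le_orderEmbOfFin (q : Fin n) :
    #{y ∈ F | y ≤ F.orderEmbOfFin h q} = q + 1 := by
  have hF := (map_orderEmbOfFin_univ F h).symm
  set e := F.orderEmbOfFin h
  rw [hF, filter_map, card_map]
  simp only [Function.comp_def, RelEmbedding.coe_toEmbedding, e.le_iff_le]
  rw [filter_ge_eq_Iic, Fin.card_Iic]

theorem card_filter_orderEmbOfFin_le (q : Fin n) :
    #{y ∈ F | F.orderEmbOfFin h q ≤ y} = n - q := by
  have hF := (map_orderEmbOfFin_univ F h).symm
  set e := F.orderEmbOfFin h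
  rw [hF, filter_map, card_map]
  simp only [Function.comp_def, RelEmbedding.coe_toEmbedding, e.le_iff_le]
  rw [filter_le_eq_Ici, Fin.card_Ici]

theorem sort_getD_lt_iff {x : α} (hx : x ∈ F) {k : ℕ} (hk₁ : 1 ≤ k) (hkF : k ≤ #F) (d : α) :
    (F.sort (· ≤ ·)).getD (k - 1) d < x ↔ k < #{y ∈ F | y ≤ x} := by
  obtain ⟨q, rfl⟩ : x ∈ Set.range (F.orderEmbOfFin rfl) := by rwa [range_orderEmbOfFin]
  have hget : (F.sort (· ≤ ·)).getD (k - 1) d = F.orderEmbOfFin rfl ⟨k - 1, by omega⟩ := by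
    rw [orderEmbOfFin_apply]
    exact List.getD_eq_getElem _ _ _
  rw [hget, card_filter_le_orderEmbOfFin, OrderEmbedding.lt_iff_lt, Fin.lt_def]
  dsimp only
  omega

theorem lt_sort_getD_iff {x : α} (hx : x ∈ F) {k : ℕ} (hk₁ : 1 ≤ k) (hkF : k ≤ #F) (d : α) :
    x < (F.sort (· ≤ ·)).getD (#F - k) d ↔ k < #{y ∈ F | x ≤ y} := by
  obtain ⟨q, rfl⟩ : x ∈ Set.range (F.orderEmbOfFin rfl) := by rwa [range_orderEmbOfFin]
  have hget : (F.sort (· ≤ ·)).getD (#F - k) d = F.orderEmbOfFin rfl ⟨#F - k, by omega⟩ := by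
    rw [orderEmbOfFin_apply]
    exact List.getD_eq_getElem _ _ _
  rw [hget, card_filter_orderEmbOfFin_le, OrderEmbedding.lt_iff_lt, Fin.lt_def]
  dsimp only
  omega

end Finset

theorem Nat.sSup_lt_iff_of_monotone {c : ℕ → ℕ} (hc : Monotone c) {m N : ℕ} (h₁ : c 1 ≤ m)
    (hN : m < c N) (R : ℕ) : sSup {k | 1 ≤ k ∧ c k ≤ m} < R ↔ m < c R := by
  set S := {k | 1 ≤ k ∧ c k ≤ m}
  have hbdd : BddAbove S := ⟨N, fun k hk => (hc.reflect_lt (hk.2.trans_lt hN)).le⟩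
  have hmem : sSup S ∈ S := Nat.sSup_mem ⟨1, le_rfl, h₁⟩ hbdd
  constructor
  · intro hR
    by_contra! hcR
    exact (le_csSup hbdd ⟨by omega, hcR⟩).not_gt hR
  · exact fun hR => hc.reflect_lt (hmem.2.trans_lt hR)

section Ranks

variable {s : ℕ} {ι : Type*} (T : Fin (s + 1) → ι → ℝ)

theorem upRank_eq_card_filter {r : ι} (hr : Function.Injective (T · r)) (i : Fin (s + 1)) :
    upRank T i r = #{y ∈ univ.image (T · r) | y ≤ T i r} := by
  rw [upRank, filter_image, card_image_of_injective _ hr, ← Set.ncard_coe_finset]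
  simp

theorem downRank_eq_card_filter {r : ι} (hr : Function.Injective (T · r)) (i : Fin (s + 1)) :
    downRank T i r = #{y ∈ univ.image (T · r) | T i r ≤ y} := by
  rw [downRank, filter_image, card_image_of_injective _ hr, ← Set.ncard_coe_finset]
  simp

theorem card_image_values_eq {r : ι} (hr : Function.Injective (T · r)) :
    #(univ.image (T · r)) = s + 1 := by
  rw [card_image_of_injective _ hr, card_univ, Fintype.card_fin]

theorem envLow_lt_iff {r : ι} (hr : Function.Injective (T · r)) (i : Fin (s + 1)) {k : ℕ}
    (hk₁ : 1 ≤ k) (hk : k ≤ s + 1) : envLow T k r < T i r ↔ k < upRank T i r := by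
  rw [envLow, upRank_eq_card_filter T hr]
  exact sort_getD_lt_iff _ (mem_image_of_mem _ (mem_univ i)) hk₁
    (by rwa [card_image_values_eq T hr]) 0

theorem lt_envUpp_iff {r : ι} (hr : Function.Injective (T · r)) (i : Fin (s + 1)) {k : ℕ}
    (hk₁ : 1 ≤ k) (hk : k ≤ s + 1) : T i r < envUpp T k r ↔ k < downRank T i r := by
  have h := lt_sort_getD_iff (univ.image (T · r)) (mem_image_of_mem _ (mem_univ i)) hk₁
    (by rwa [card_image_values_eq T hr]) 0
  rwa [card_image_values_eq T hr, ← downRank_eq_card_filter T hr] at h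

theorem envelope_iff_lt_twoSidedRank {r : ι} (hr : Function.Injective (T · r)) (i : Fin (s + 1))
    {k : ℕ} (hk₁ : 1 ≤ k) (hk : k ≤ s + 1) :
    envLow T k r < T i r ∧ T i r < envUpp T k r ↔ k < twoSidedRank T i r := by
  rw [envLow_lt_iff T hr i hk₁ hk, lt_envUpp_iff T hr i hk₁ hk, twoSidedRank, lt_min_iff]

variable [Fintype ι] [Nonempty ι]

theorem forall_envelope_iff_lt_extremeRank (hT : ∀ r, Function.Injective (T · r))
    (i : Fin (s + 1)) {k : ℕ} (hk₁ : 1 ≤ k) (hk : k ≤ s + 1) :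
    (∀ r, envLow T k r < T i r ∧ T i r < envUpp T k r) ↔ k < extremeRank T i := by
  simp only [extremeRank, lt_inf'_iff, mem_univ, true_implies,
    envelope_iff_lt_twoSidedRank T (hT _) i hk₁ hk]

theorem one_le_extremeRank (i : Fin (s + 1)) : 1 ≤ extremeRank T i := by
  simp only [extremeRank, le_inf'_iff, mem_univ, true_implies, twoSidedRank, le_min_iff,
    upRank, downRank]
  intro r
  constructor <;> exact (Set.ncard_pos (Set.toFinite _)).2 ⟨i, Set.mem_ofPred.2 le_rfl⟩

theorem extremeRank_le (i : Fin (s + 1)) : extremeRank T i ≤ s + 1 :=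
  calc extremeRank T i ≤ upRank T i (Classical.arbitrary ι) :=
        (inf'_le _ (mem_univ _)).trans (min_le_left _ _)
    _ ≤ Nat.card (Fin (s + 1)) := Set.ncard_le_card _
    _ = s + 1 := Nat.card_fin _

end Ranks

theorem rank_envelope_acceptance_general
    {s : ℕ} {ι : Type*} [Fintype ι] [Nonempty ι]
    (T : Fin (s + 1) → ι → ℝ)
    (hnoties : ∀ r : ι, ∀ i j : Fin (s + 1), i ≠ j → T i r ≠ T j r)
    (α : ℝ) (hα1 : α < 1)
    (m : ℕ) (hm : (m : ℝ) = α * (s + 1))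
    (kα : ℕ)
    (hkα : kα = sSup {k : ℕ | 1 ≤ k ∧ {i : Fin (s + 1) | extremeRank T i < k}.ncard ≤ m}) :
    (∀ r : ι, envLow T kα r < T 0 r ∧ T 0 r < envUpp T kα r) ↔
      α < ({i : Fin (s + 1) | extremeRank T i < extremeRank T 0}.ncard : ℝ) / (s + 1) := by
  have hT : ∀ r, Function.Injective (T · r) := fun r _ _ => not_imp_not.1 (hnoties r _ _)
  set c : ℕ → ℕ := fun k => {i : Fin (s + 1) | extremeRank T i < k}.ncard
  have hc : Monotone c := fun a b hab =>
    Set.ncard_le_ncard fun i (hi : extremeRank T i < a) => hi.trans_le hab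
  have hc₁ : c 1 = 0 := by
    simp [c, not_lt.2 (one_le_extremeRank T _)]
  have hc_top : c (s + 2) = s + 1 := by
    simp [c, Nat.lt_succ_iff.2 (extremeRank_le T _)]
  have hms : m < s + 1 := by
    have : (m : ℝ) < s + 1 := by rw [hm]; nlinarith
    exact_mod_cast this
  have hkα_lt : ∀ R, kα < R ↔ m < c R :=
    hkα ▸ Nat.sSup_lt_iff_of_monotone hc (hc₁ ▸ m.zero_le) (hc_top ▸ hms)
  have hk₁ : 1 ≤ kα := not_lt.1 fun h => by have := (hkα_lt 1).1 h; omega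
  have hk : kα ≤ s + 1 := Nat.lt_succ_iff.1 ((hkα_lt (s + 2)).2 (by omega))
  rw [forall_envelope_iff_lt_extremeRank T hT 0 hk₁ hk, hkα_lt, lt_div_iff₀ (by positivity), ← hm,
    Nat.cast_lt]

/-- **Rank envelope test, acceptance case.**
The observed curve lies strictly inside the global rank envelope, i.e.
`T_low^(k_α)(r) < T_1(r) < T_upp^(k_α)(r)` for all `r ∈ I`, if and only if `p_- > α`,
where `p_- = #{i : R_i < R_1}/(s+1)`. -/
theorem rank_envelope_acceptance
    {s : ℕ} (hs : 1 ≤ s) {ι : Type*} [Fintype ι] [Nonempty ι]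
    (T : Fin (s + 1) → ι → ℝ)
    (hnoties : ∀ r : ι, ∀ i j : Fin (s + 1), i ≠ j → T i r ≠ T j r)
    (α : ℝ) (hα0 : 0 ≤ α) (hα1 : α < 1)
    (m : ℕ) (hm : (m : ℝ) = α * (s + 1))
    (kα : ℕ)
    (hkα : kα = sSup {k : ℕ | 1 ≤ k ∧ {i : Fin (s + 1) | extremeRank T i < k}.ncard ≤ m}) :
    (∀ r : ι, envLow T kα r < T 0 r ∧ T 0 r < envUpp T kα r) ↔
      α < ({i : Fin (s + 1) | extremeRank T i < extremeRank T 0}.ncard : ℝ) / (s + 1) :=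
  rank_envelope_acceptance_general T hnoties α hα1 m hm kα hkα
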